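/- Let $\alpha \geq \beta > 0$, $\eta = \alpha\beta$, $\sigma > 0$. Then $\int (x \mid \alpha - \beta)_n \, \mu_{\alpha,\beta,\sigma}(dx) = \beta^n (\sigma/\eta)^{(n)}$ for all $n \geq 0$. -/

import Mathlib

open MeasureTheory

/-- The orthogonality measure `μ_{α,β,σ}`: the gamma distribution when `α = β`, and the
negative binomial (Pascal) distribution on `(α-β)ℕ₀` when `α ≠ β`. Here `η = αβ`. -/
noncomputable def muM (α β σ : ℝ) : Measure ℝ :=
  if α = β then
    volume.withDensity fun x =>
      ENNReal.ofReal (if 0 < x then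
        (Real.Gamma (σ / (α * β)))⁻¹ * α ^ (-(σ / (α * β))) * x ^ (σ / (α * β) - 1)
          * Real.exp (-x / α)
      else 0)
  else
    Measure.sum fun m : ℕ =>
      ENNReal.ofReal ((1 - β / α) ^ (σ / (α * β)) * (β / α) ^ m * ((m.factorial : ℝ))⁻¹ *
        ∏ j ∈ Finset.range m, (σ / (α * β) + j)) • Measure.dirac ((α - β) * m)

/-!
With `k = σ/(αβ)`: for `α = β` the integrand is `xⁿ`, and the `n`-th moment of the gamma law
with shape `k` and scale `α` is `αⁿ Γ(k+n)/Γ(k) = αⁿ (k)⁽ⁿ⁾`.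
For `α > β` the integrand at the atom `(α-β)m` is `(α-β)ⁿ m(m-1)⋯(m-n+1)`, so the integral is
`(α-β)ⁿ` times the `n`-th factorial moment of the negative binomial law. Shifting `m ↦ m + n`
turns that moment into `qⁿ (k)⁽ⁿ⁾` times the binomial series
`∑ₗ (k+n)⁽ˡ⁾ qˡ/l! = (1-q)^(-(k+n))` with `q = β/α`, and `(α-β) q/(1-q) = β`.
-/

open Finset

lemma ascPochhammer_eval_eq_prod_range {R : Type*} [CommSemiring R] (n : ℕ) (r : R) :
    (ascPochhammer R n).eval r = ∏ j ∈ range n, (r + j) := by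
  induction n with
  | zero => simp
  | succ n ih => rw [ascPochhammer_succ_eval, ih, prod_range_succ]

lemma Ring.choose_add_natCast_sub_one {K : Type*} [Field K] [CharZero K] (k : K) (n : ℕ) :
    Ring.choose (k + n - 1) n = (n.factorial : K)⁻¹ * ∏ j ∈ range n, (k + j) := by
  rw [Ring.choose_eq_smul, Polynomial.descPochhammer_smeval_eq_ascPochhammer,
    Polynomial.ascPochhammer_smeval_eq_eval, ascPochhammer_eval_eq_prod_range, smul_eq_mul]
  congr 2 with j
  ring

lemma Real.Gamma_add_nat_eq_mul_prod {k : ℝ} (hk : ∀ j : ℕ, k + j ≠ 0) (n : ℕ) :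
    Real.Gamma (k + n) = Real.Gamma k * ∏ j ∈ range n, (k + j) := by
  induction n with
  | zero => simp
  | succ n ih =>
    rw [Nat.cast_succ, ← add_assoc, Real.Gamma_add_one (hk n), ih, prod_range_succ]
    ring

theorem hasSum_pow_div_factorial_mul_prod (k : ℝ) {q : ℝ} (hq : |q| < 1) :
    HasSum (fun m : ℕ => q ^ m / m.factorial * ∏ j ∈ range m, (k + j)) ((1 - q) ^ (-k)) := by
  have hball : q ∈ Metric.eball (0 : ℝ) 1 := by
    rw [Metric.mem_eball, edist_zero_right, ← ofReal_norm, ENNReal.ofReal_lt_one]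
    simpa using hq
  have := (Real.one_div_one_sub_rpow_hasFPowerSeriesOnBall_zero k).hasSum hball
  simp only [FormalMultilinearSeries.ofScalars_apply_eq, zero_add,
    Ring.choose_add_natCast_sub_one, smul_eq_mul] at this
  rw [Real.rpow_neg (by linarith [le_abs_self q]), inv_eq_one_div]
  simpa only [div_eq_inv_mul, mul_assoc, mul_comm, mul_left_comm] using this

theorem hasSum_descFactorial_mul_pow_div_factorial_mul_prod (k : ℝ) {q : ℝ} (hq : |q| < 1)
    (n : ℕ) :
    HasSum (fun m : ℕ => (m.descFactorial n : ℝ) * (q ^ m / m.factorial * ∏ j ∈ range m, (k + j)))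
      (q ^ n * (∏ j ∈ range n, (k + j)) * (1 - q) ^ (-(k + n))) := by
  rw [← hasSum_nat_add_iff' n, sum_eq_zero fun i hi => by
    simp [Nat.descFactorial_eq_zero_iff_lt.mpr (mem_range.mp hi)], sub_zero]
  have hterm : ∀ l : ℕ, ((l + n).descFactorial n : ℝ) *
      (q ^ (l + n) / (l + n).factorial * ∏ j ∈ range (l + n), (k + j)) =
      q ^ n * (∏ j ∈ range n, (k + j)) * (q ^ l / l.factorial * ∏ j ∈ range l, (k + n + j)) := by
    intro l
    have hfac : (l.factorial : ℝ) * (l + n).descFactorial n = (l + n).factorial := by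
      rw [Nat.add_descFactorial_eq_ascFactorial]
      exact_mod_cast Nat.factorial_mul_ascFactorial l n
    rw [← hfac, add_comm l n, prod_range_add, pow_add]
    have : (l.factorial : ℝ) ≠ 0 := by positivity
    field_simp
    simp only [Nat.cast_add, add_assoc]
  simpa only [hterm] using (hasSum_pow_div_factorial_mul_prod (k + n) hq).mul_left
    (q ^ n * ∏ j ∈ range n, (k + j))

theorem integral_sum_ofReal_smul_dirac {X : Type*} [MeasurableSpace X]
    [MeasurableSingletonClass X] {w : ℕ → ℝ} (hw : ∀ m, 0 ≤ w m) (x : ℕ → X) {f : X → ℝ}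
    (hf : Measurable f) (hsum : Summable fun m => w m * |f (x m)|) :
    ∫ y, f y ∂(Measure.sum fun m => ENNReal.ofReal (w m) • Measure.dirac (x m)) =
      ∑' m, w m * f (x m) := by
  have hint : Integrable f (Measure.sum fun m => ENNReal.ofReal (w m) • Measure.dirac (x m)) := by
    refine ⟨hf.aestronglyMeasurable, ?_⟩
    rw [HasFiniteIntegral, lintegral_sum_measure]
    simp only [lintegral_smul_measure, lintegral_dirac, ← ofReal_norm, Real.norm_eq_abs,
      smul_eq_mul, ← ENNReal.ofReal_mul (hw _)]
    rw [← ENNReal.ofReal_tsum_of_nonneg (fun m => mul_nonneg (hw m) (abs_nonneg _)) hsum]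
    exact ENNReal.ofReal_lt_top
  rw [integral_sum_measure hint]
  simp only [integral_smul_measure, integral_dirac, ENNReal.toReal_ofReal (hw _), smul_eq_mul]

theorem integral_pow_muM_self {α σ : ℝ} (hα : 0 < α) (hσ : 0 < σ) (n : ℕ) :
    ∫ x, x ^ n ∂(muM α α σ) = α ^ n * ∏ j ∈ range n, (σ / (α * α) + j) := by
  rw [muM, if_pos rfl]
  set k := σ / (α * α)
  have hk : 0 < k := by positivity
  have hdens : ∀ x : ℝ, (ENNReal.ofReal (if 0 < x then
      (Real.Gamma k)⁻¹ * α ^ (-k) * x ^ (k - 1) * Real.exp (-x / α) else 0)).toReal • x ^ n =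
      (Set.Ioi 0).indicator
        (fun x => ((Real.Gamma k)⁻¹ * α ^ (-k)) * (x ^ (k + n - 1) * Real.exp (-(α⁻¹ * x)))) x := by
    intro x
    by_cases hx : 0 < x
    · have hΓ := Real.Gamma_pos_of_pos hk
      rw [if_pos hx, Set.indicator_of_mem (Set.mem_Ioi.mpr hx), ENNReal.toReal_ofReal (by positivity),
        add_sub_right_comm, Real.rpow_add_natCast hx.ne', smul_eq_mul]
      ring_nf
    · simp [hx]
  rw [integral_withDensity_eq_integral_toReal_smul
    (Measurable.ite measurableSet_Ioi (by fun_prop) measurable_const).ennreal_ofReal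
    (ae_of_all _ fun _ => ENNReal.ofReal_lt_top)]
  simp only [hdens]
  rw [integral_indicator measurableSet_Ioi, integral_const_mul,
    Real.integral_rpow_mul_exp_neg_mul_Ioi (by positivity) (by positivity), one_div, inv_inv,
    Real.Gamma_add_nat_eq_mul_prod (fun j => by positivity), Real.rpow_add_natCast hα.ne',
    Real.rpow_neg hα.le]
  have := (Real.Gamma_pos_of_pos hk).ne'
  have := (Real.rpow_pos_of_pos hα k).ne'
  field_simp

theorem integral_prod_sub_muM_of_lt {α β σ : ℝ} (hβ : 0 < β) (hβα : β < α) (hσ : 0 ≤ σ)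
    (n : ℕ) :
    ∫ x, (∏ j ∈ range n, (x - j * (α - β))) ∂(muM α β σ) =
      β ^ n * ∏ j ∈ range n, (σ / (α * β) + j) := by
  have hα : 0 < α := hβ.trans hβα
  rw [muM, if_neg hβα.ne']
  set k := σ / (α * β)
  set q := β / α with hq_def
  set d := α - β with hd_def
  have hk : 0 ≤ k := by positivity
  have hq0 : 0 < q := by positivity
  have hq1 : q < 1 := (div_lt_one hα).mpr hβα
  have hq : |q| < 1 := by rwa [abs_of_pos hq0]
  have hd : 0 < d := sub_pos.mpr hβα
  clear_value k q d
  have hw : ∀ m : ℕ, 0 ≤ (1 - q) ^ k * q ^ m * ((m.factorial : ℝ))⁻¹ * ∏ j ∈ range m, (k + j) :=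
    fun m => by have := Real.rpow_nonneg (sub_nonneg.mpr hq1.le) k; positivity
  have hval : ∀ m : ℕ, ∏ j ∈ range n, (d * m - j * d) = d ^ n * m.descFactorial n := by
    intro m
    simp_rw [show ∀ j : ℕ, d * m - j * d = d * (m - j) from fun j => by ring]
    rw [prod_mul_distrib, prod_const, card_range, prod_range_natCast_sub,
      Nat.descFactorial_eq_prod_range]
  have hterm : ∀ m : ℕ, ((1 - q) ^ k * q ^ m * ((m.factorial : ℝ))⁻¹ * ∏ j ∈ range m, (k + j)) *
      ∏ j ∈ range n, (d * m - j * d) = ((1 - q) ^ k * d ^ n) *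
      ((m.descFactorial n : ℝ) * (q ^ m / m.factorial * ∏ j ∈ range m, (k + j))) := by
    intro m; rw [hval]; ring
  have hsum := (hasSum_descFactorial_mul_pow_div_factorial_mul_prod k hq n).mul_left
    ((1 - q) ^ k * d ^ n)
  simp only [← hterm] at hsum
  rw [integral_sum_ofReal_smul_dirac hw _ (by fun_prop) ?_, hsum.tsum_eq]
  · have h1q : 0 < 1 - q := sub_pos.mpr hq1
    have hpow : (1 - q) ^ k * (1 - q) ^ (-(k + n)) = ((1 - q) ^ n)⁻¹ := by
      rw [← Real.rpow_add h1q, show k + -(k + n) = -(n : ℝ) by ring, Real.rpow_neg h1q.le,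
        Real.rpow_natCast]
    have hβ_eq : d * q / (1 - q) = β := by
      rw [hq_def, one_sub_div hα.ne', ← hd_def]
      field_simp
    calc (1 - q) ^ k * d ^ n * ((q ^ n * ∏ j ∈ range n, (k + j)) * (1 - q) ^ (-(k + n)))
        = (d * q / (1 - q)) ^ n * ∏ j ∈ range n, (k + j) := by
          rw [div_pow, mul_pow, div_eq_mul_inv, ← hpow]
          ring
      _ = β ^ n * ∏ j ∈ range n, (k + j) := by rw [hβ_eq]
  · have hf : ∀ m : ℕ, 0 ≤ ∏ j ∈ range n, (d * m - j * d) := fun m => by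
      rw [hval]
      positivity
    simpa only [abs_of_nonneg (hf _)] using hsum.summable

theorem stmt_9 (α β σ : ℝ) (hβ : 0 < β) (hαβ : β ≤ α) (hσ : 0 < σ) (n : ℕ) :
    ∫ x, (∏ j ∈ Finset.range n, (x - j * (α - β))) ∂(muM α β σ) =
      β ^ n * ∏ j ∈ Finset.range n, (σ / (α * β) + j) := by
  rcases hαβ.eq_or_lt with rfl | hβα
  · simp only [sub_self, mul_zero, sub_zero, prod_const, card_range]
    exact integral_pow_muM_self hβ hσ n
  · exact integral_prod_sub_muM_of_lt hβ hβα hσ.le n
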